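/- For every R ≥ 0: D̃(e^{−R},Q_Y) = inf over all channels W (families of probability mass functions W(·|x) on 𝒴 indexed by x ∈ 𝒳) satisfying P_X(x) W(y|x) ≤ e^R P_X(x) Q_Y(y) for all x ∈ 𝒳 and y ∈ 𝒴, of Σ_{x∈𝒳} Σ_{y∈𝒴} P_X(x) W(y|x) d(x,y). (The constraint states D_∞(P_X × W ‖ P_X × Q_Y) ≤ R.) -/

import Mathlib

open MeasureTheory

/-- The pairwise correct probability `p_c(x,y,u)` with respect to the pmf `Q` on `Y`:
`p_c(x,y,u) = Q{y' : d(x,y') < d(x,y)} + u * Q{y' : d(x,y') = d(x,y)}`. -/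
noncomputable def pc {X Y : Type*} [Fintype Y] (Q : Y → ℝ) (d : X → Y → ℝ)
    (x : X) (y : Y) (u : ℝ) : ℝ :=
  (∑ y' : Y, if d x y' < d x y then Q y' else 0)
    + u * (∑ y' : Y, if d x y' = d x y then Q y' else 0)

/-- The functional `D̃(w,Q) = w⁻¹ ⬝ E_{P ⊗ Q ⊗ Unif[0,1]}[ d(X,Y) ⬝ 1{p_c(X,Y,U) ≤ w} ]`. -/
noncomputable def Dtilde {X Y : Type*} [Fintype X] [Fintype Y]
    (P : X → ℝ) (Q : Y → ℝ) (d : X → Y → ℝ) (w : ℝ) : ℝ :=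
  w⁻¹ * ∑ x : X, ∑ y : Y, P x * Q y * d x y *
    (∫ u in Set.Icc (0:ℝ) 1, if pc Q d x y u ≤ w then (1:ℝ) else 0)

/-!
Write `w = e^{-R}` and fix `x`, with `g = d(x, ·)`. The channel `W*(y) = w⁻¹ Q(y) P_U(p_c(x,y,U) ≤ w)`
has expected distortion `D̃(w, Q)` and satisfies `W* ≤ w⁻¹ Q`. It is a probability vector: on a level
`{g = v}` its mass is `w⁻¹ (min(Q{g ≤ v}, w) - min(Q{g < v}, w))`, and these increments telescope
to `1` over the levels. It is optimal by the bathtub principle: `W*` equals the cap `w⁻¹ Q` below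
the largest level it charges and vanishes above it, so every other channel under the cap puts at
least as much mass on larger distortions.
-/

theorem Finset.sum_filter_le_sub_filter_lt {α β : Type*} [LinearOrder α] [AddCommGroup β]
    (G : Finset α → β) (s : Finset α) :
    ∑ v ∈ s, (G {u ∈ s | u ≤ v} - G {u ∈ s | u < v}) = G s - G ∅ := by
  induction s using Finset.induction_on_max with
  | empty => simp
  | insert m t hlt ih =>
    have hm : m ∉ t := fun h => (hlt m h).false
    have hle : {u ∈ insert m t | u ≤ m} = insert m t :=
      filter_true_of_mem fun u hu => (mem_insert.mp hu).elim le_of_eq fun h => (hlt u h).le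
    have hlt' : {u ∈ insert m t | u < m} = t := by
      rw [filter_insert, if_neg (lt_irrefl m), filter_true_of_mem hlt]
    have hsum : ∀ v ∈ t, G {u ∈ insert m t | u ≤ v} - G {u ∈ insert m t | u < v}
        = G {u ∈ t | u ≤ v} - G {u ∈ t | u < v} := by
      intro v hv
      rw [filter_insert, filter_insert, if_neg (hlt v hv).not_ge, if_neg (hlt v hv).not_gt]
    rw [sum_insert hm, hle, hlt', sum_congr rfl hsum, ih]
    abel

theorem Finset.sum_mul_le_sum_mul_of_threshold {ι : Type*} (s : Finset ι) {V W g : ι → ℝ}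
    (t : ℝ) (hlt : ∀ i ∈ s, g i < t → W i ≤ V i) (hgt : ∀ i ∈ s, t < g i → V i ≤ W i)
    (hsum : ∑ i ∈ s, W i = ∑ i ∈ s, V i) :
    ∑ i ∈ s, V i * g i ≤ ∑ i ∈ s, W i * g i := by
  have hterm : ∀ i ∈ s, 0 ≤ (W i - V i) * (g i - t) := by
    intro i hi
    rcases lt_trichotomy (g i) t with h | h | h
    · exact mul_nonneg_of_nonpos_of_nonpos (by linarith [hlt i hi h]) (by linarith)
    · simp [h]
    · exact mul_nonneg (by linarith [hgt i hi h]) (by linarith)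
  have hsum_term := sum_nonneg hterm
  simp only [sub_mul, mul_sub, sum_sub_distrib, ← sum_mul, hsum] at hsum_term
  linarith

noncomputable def acceptProb (a b w : ℝ) : ℝ :=
  ∫ u in Set.Icc (0:ℝ) 1, if a + u * b ≤ w then (1:ℝ) else 0

namespace acceptProb

open Set

variable {a b w : ℝ}

variable (a b w) in
lemma eq_measureReal :
    acceptProb a b w = volume.real ({u | a + u * b ≤ w} ∩ Icc 0 1) := by
  have hmeas : MeasurableSet {u : ℝ | a + u * b ≤ w} :=
    measurableSet_le (by fun_prop) (by fun_prop)
  rw [acceptProb, ← measureReal_restrict_apply hmeas, ← integral_indicator_one hmeas]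
  rfl

lemma nonneg : 0 ≤ acceptProb a b w := by
  rw [eq_measureReal]
  exact measureReal_nonneg

lemma le_one : acceptProb a b w ≤ 1 := by
  rw [eq_measureReal]
  calc _ ≤ volume.real (Icc (0:ℝ) 1) := measureReal_mono inter_subset_right measure_Icc_lt_top.ne
    _ = 1 := by simp

lemma eq_one (hb : 0 ≤ b) (h : a + b ≤ w) : acceptProb a b w = 1 := by
  have hset : {u | a + u * b ≤ w} ∩ Icc 0 1 = Icc 0 1 :=
    inter_eq_right.mpr fun u hu => show a + u * b ≤ w by nlinarith [hu.1, hu.2]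
  simp [eq_measureReal, hset]

lemma eq_zero (hb : 0 ≤ b) (h : w < a) : acceptProb a b w = 0 := by
  have hset : {u | a + u * b ≤ w} ∩ Icc 0 1 = ∅ :=
    eq_empty_of_forall_notMem fun u ⟨(hu : a + u * b ≤ w), hu0, _⟩ => by nlinarith
  simp [eq_measureReal, hset]

lemma mul_eq (hb : 0 ≤ b) : b * acceptProb a b w = min (a + b) w - min a w := by
  rcases hb.eq_or_lt with rfl | hb
  · simp
  have hset : {u | a + u * b ≤ w} ∩ Icc 0 1 = Icc 0 (min 1 ((w - a) / b)) := by
    ext u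
    simp only [mem_inter_iff, mem_ofPred_eq, mem_Icc, le_min_iff, le_div_iff₀ hb]
    constructor <;> rintro ⟨h1, h2, h3⟩ <;> exact ⟨by linarith, by linarith, by linarith⟩
  rw [eq_measureReal, hset, Real.volume_real_Icc, sub_zero, mul_max_of_nonneg _ _ hb.le,
    mul_min_of_nonneg _ _ hb.le, mul_div_cancel₀ _ hb.ne', mul_one, mul_zero]
  simp only [min_def, max_def]
  split_ifs <;> linarith

end acceptProb

section OptimalChannel

open Finset

variable {Y : Type*} [Fintype Y] {Q : Y → ℝ} {g : Y → ℝ} {w : ℝ}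

variable (Q g) in
noncomputable def lowerMass (v : ℝ) : ℝ := ∑ y, if g y < v then Q y else 0

variable (Q g) in
noncomputable def levelMass (v : ℝ) : ℝ := ∑ y, if g y = v then Q y else 0

variable (Q g w) in
noncomputable def optimalChannel (y : Y) : ℝ :=
  w⁻¹ * (Q y * acceptProb (lowerMass Q g (g y)) (levelMass Q g (g y)) w)

lemma levelMass_nonneg (hQ0 : ∀ y, 0 ≤ Q y) (v : ℝ) : 0 ≤ levelMass Q g v :=
  sum_nonneg fun y _ => by split_ifs <;> simp [hQ0 y]

variable (Q g) in
lemma lowerMass_add_levelMass (v : ℝ) :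
    lowerMass Q g v + levelMass Q g v = ∑ y, if g y ≤ v then Q y else 0 := by
  rw [lowerMass, levelMass, ← sum_add_distrib]
  refine sum_congr rfl fun y _ => ?_
  rcases lt_trichotomy (g y) v with h | h | h
  · simp [h, h.le, h.ne]
  · simp [h]
  · simp [h.not_ge, h.not_gt, h.ne']

lemma sum_mul_acceptProb (hQ0 : ∀ y, 0 ≤ Q y) (hQ1 : ∑ y, Q y = 1) (hw0 : 0 ≤ w) (hw1 : w ≤ 1) :
    ∑ y, Q y * acceptProb (lowerMass Q g (g y)) (levelMass Q g (g y)) w = w := by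
  classical
  set S := univ.image g
  let G : Finset ℝ → ℝ := fun T => min (∑ y, if g y ∈ T then Q y else 0) w
  have hgroup : ∑ y, Q y * acceptProb (lowerMass Q g (g y)) (levelMass Q g (g y)) w
      = ∑ v ∈ S, levelMass Q g v * acceptProb (lowerMass Q g v) (levelMass Q g v) w := by
    refine (sum_image' _ fun y _ => ?_).symm
    nth_rw 1 [levelMass, ← sum_filter]
    rw [sum_mul]
    exact sum_congr rfl fun j hj => by rw [(mem_filter.mp hj).2]
  have hlevel : ∀ v, levelMass Q g v * acceptProb (lowerMass Q g v) (levelMass Q g v) w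
      = G {u ∈ S | u ≤ v} - G {u ∈ S | u < v} := by
    intro v
    rw [acceptProb.mul_eq (levelMass_nonneg hQ0 v), lowerMass_add_levelMass]
    simp [G, S, lowerMass]
  rw [hgroup, sum_congr rfl fun v _ => hlevel v, sum_filter_le_sub_filter_lt]
  simp [G, S, hQ1, hw0, hw1]

lemma optimalChannel_nonneg (hQ0 : ∀ y, 0 ≤ Q y) (hw : 0 ≤ w) (y : Y) :
    0 ≤ optimalChannel Q g w y :=
  mul_nonneg (inv_nonneg.mpr hw) (mul_nonneg (hQ0 y) acceptProb.nonneg)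

lemma optimalChannel_le (hQ0 : ∀ y, 0 ≤ Q y) (hw : 0 ≤ w) (y : Y) :
    optimalChannel Q g w y ≤ w⁻¹ * Q y :=
  mul_le_mul_of_nonneg_left (mul_le_of_le_one_right (hQ0 y) acceptProb.le_one) (inv_nonneg.mpr hw)

lemma sum_optimalChannel (hQ0 : ∀ y, 0 ≤ Q y) (hQ1 : ∑ y, Q y = 1) (hw0 : 0 < w) (hw1 : w ≤ 1) :
    ∑ y, optimalChannel Q g w y = 1 := by
  unfold optimalChannel
  rw [← mul_sum, sum_mul_acceptProb hQ0 hQ1 hw0.le hw1, inv_mul_cancel₀ hw0.ne']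

lemma optimalChannel_eq_of_lt (hQ0 : ∀ y, 0 ≤ Q y) {y₁ y₂ : Y} (hlt : g y₁ < g y₂)
    (hy₂ : optimalChannel Q g w y₂ ≠ 0) : optimalChannel Q g w y₁ = w⁻¹ * Q y₁ := by
  have hlower : lowerMass Q g (g y₂) ≤ w := by
    by_contra! h
    exact hy₂ (by simp [optimalChannel, acceptProb.eq_zero (levelMass_nonneg hQ0 _) h])
  have hmono : lowerMass Q g (g y₁) + levelMass Q g (g y₁) ≤ lowerMass Q g (g y₂) := by
    rw [lowerMass_add_levelMass, lowerMass]
    exact sum_le_sum fun y _ => by split_ifs <;> linarith [hQ0 y]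
  rw [optimalChannel, acceptProb.eq_one (levelMass_nonneg hQ0 _) (hmono.trans hlower), mul_one]

lemma sum_optimalChannel_mul_le (hQ0 : ∀ y, 0 ≤ Q y) (hQ1 : ∑ y, Q y = 1) (hw0 : 0 < w)
    (hw1 : w ≤ 1) {W : Y → ℝ} (hW0 : ∀ y, 0 ≤ W y) (hWQ : ∀ y, W y ≤ w⁻¹ * Q y)
    (hW1 : ∑ y, W y = 1) :
    ∑ y, optimalChannel Q g w y * g y ≤ ∑ y, W y * g y := by
  classical
  have hsum := sum_optimalChannel (g := g) hQ0 hQ1 hw0 hw1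
  obtain ⟨y₀, -, hy₀⟩ := exists_ne_zero_of_sum_ne_zero (hsum ▸ one_ne_zero)
  obtain ⟨ymax, hymax, hmax⟩ := exists_max_image {y | optimalChannel Q g w y ≠ 0} g ⟨y₀, by simpa⟩
  refine sum_mul_le_sum_mul_of_threshold _ (g ymax) (fun y _ hy => ?_) (fun y _ hy => ?_)
    (hW1.trans hsum.symm)
  · exact (hWQ y).trans (optimalChannel_eq_of_lt hQ0 hy (mem_filter.mp hymax).2).ge
  · by_contra! h
    exact hy.not_ge (hmax y (by simpa using ((hW0 y).trans_lt h).ne'))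

end OptimalChannel

section Variational

open Finset

variable {X Y : Type*} [Fintype X] [Fintype Y] {P : X → ℝ} {Q : Y → ℝ} {d : X → Y → ℝ} {w : ℝ}

variable (P Q d w) in
lemma Dtilde_eq_sum_optimalChannel :
    Dtilde P Q d w = ∑ x, ∑ y, P x * optimalChannel Q (d x) w y * d x y := by
  simp only [Dtilde, mul_sum]
  refine sum_congr rfl fun x _ => sum_congr rfl fun y _ => ?_
  have hpc : (∫ u in Set.Icc (0:ℝ) 1, if pc Q d x y u ≤ w then (1:ℝ) else 0)
      = acceptProb (lowerMass Q (d x) (d x y)) (levelMass Q (d x) (d x y)) w := rfl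
  rw [hpc, optimalChannel]
  ring

lemma isLeast_Dtilde (hP0 : ∀ x, 0 ≤ P x) (hQ0 : ∀ y, 0 ≤ Q y) (hQ1 : ∑ y, Q y = 1)
    (hw0 : 0 < w) (hw1 : w ≤ 1) :
    IsLeast {v : ℝ | ∃ W : X → Y → ℝ,
      (∀ x y, 0 ≤ W x y) ∧ (∀ x, ∑ y : Y, W x y = 1) ∧
      (∀ x y, P x * W x y ≤ w⁻¹ * (P x * Q y)) ∧
      v = ∑ x : X, ∑ y : Y, P x * W x y * d x y} (Dtilde P Q d w) := by
  refine ⟨⟨fun x => optimalChannel Q (d x) w, fun x => optimalChannel_nonneg hQ0 hw0.le,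
    fun x => sum_optimalChannel hQ0 hQ1 hw0 hw1, fun x y => ?_,
    Dtilde_eq_sum_optimalChannel ..⟩, ?_⟩
  · rw [mul_left_comm]
    exact mul_le_mul_of_nonneg_left (optimalChannel_le hQ0 hw0.le y) (hP0 x)
  · rintro _ ⟨W, hW0, hW1, hWQ, rfl⟩
    rw [Dtilde_eq_sum_optimalChannel]
    refine sum_le_sum fun x _ => ?_
    simp only [mul_assoc, ← mul_sum]
    rcases (hP0 x).eq_or_lt with hx | hx
    · simp [← hx]
    have hWx : ∀ y, W x y ≤ w⁻¹ * Q y :=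
      fun y => le_of_mul_le_mul_left ((hWQ x y).trans_eq (mul_left_comm ..)) hx
    exact mul_le_mul_of_nonneg_left
      (sum_optimalChannel_mul_le hQ0 hQ1 hw0 hw1 (hW0 x) hWx (hW1 x)) hx.le

end Variational

theorem variational_inf {X Y : Type*} [Fintype X] [Fintype Y]
    (P : X → ℝ) (hP0 : ∀ x, 0 ≤ P x)
    (Q : Y → ℝ) (hQ0 : ∀ y, 0 ≤ Q y) (hQ1 : ∑ y : Y, Q y = 1)
    (d : X → Y → ℝ)
    (R : ℝ) (hR : 0 ≤ R) :
    Dtilde P Q d (Real.exp (-R)) = sInf {v : ℝ | ∃ W : X → Y → ℝ,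
      (∀ x y, 0 ≤ W x y) ∧ (∀ x, ∑ y : Y, W x y = 1) ∧
      (∀ x y, P x * W x y ≤ Real.exp R * (P x * Q y)) ∧
      v = ∑ x : X, ∑ y : Y, P x * W x y * d x y} := by
  have hw1 : Real.exp (-R) ≤ 1 := Real.exp_le_one_iff.mpr (neg_nonpos.mpr hR)
  rw [← inv_inv (Real.exp R), ← Real.exp_neg]
  exact (isLeast_Dtilde hP0 hQ0 hQ1 (Real.exp_pos _) hw1).csInf_eq.symm
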